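/- Let n ≥ s ≥ 1 be integers and T_s = {x ∈ ℂ^{n²} : ‖x‖₂ = 1, ‖x‖₀ ≤ s}. Then for all x, y ∈ T_s, d₂(x,y) = ( Σ_{q'≠q} | x* A_{q'}* A_q x − y* A_{q'}* A_q y |² )^{1/2} ≤ 2 √(sn) · ‖x − y‖₂. -/

import Mathlib

open MeasureTheory ProbabilityTheory Matrix

noncomputable section

/-- Cyclic translation on `ℂⁿ`: `(T h) q = h (q-1)`. -/
def Tmat (n : ℕ) : Matrix (Fin n) (Fin n) ℂ :=
  fun q j => if (j : ℕ) = ((q : ℕ) + (n - 1)) % n then 1 else 0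

/-- Modulation on `ℂⁿ`: `(M h) q = exp(2πiq/n) h q`. -/
def Mmat (n : ℕ) : Matrix (Fin n) (Fin n) ℂ :=
  Matrix.diagonal fun q => Complex.exp (2 * Real.pi * Complex.I * (q : ℕ) / n)

/-- Time-frequency shift `π(λ) = M^ℓ T^k` for `λ = (k, ℓ)`. -/
def pimat (n : ℕ) (lam : Fin n × Fin n) : Matrix (Fin n) (Fin n) ℂ :=
  Mmat n ^ (lam.2 : ℕ) * Tmat n ^ (lam.1 : ℕ)

/-- The matrix `A_q = (T^q | M T^q | ⋯ | M^{n-1} T^q)`: its column `λ = (k,ℓ)` is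
the `k`-th column of `M^ℓ T^q`. -/
def Amat (n : ℕ) (q : Fin n) : Matrix (Fin n) (Fin n × Fin n) ℂ :=
  fun r lam => (Mmat n ^ (lam.2 : ℕ) * Tmat n ^ (q : ℕ)) r lam.1

/-- The matrix `W_{q',q} = A_{q'}^* A_q` for `q' ≠ q`, and `0` for `q' = q`. -/
def Wmat (n : ℕ) (q' q : Fin n) : Matrix (Fin n × Fin n) (Fin n × Fin n) ℂ :=
  if q' = q then 0 else (Amat n q')ᴴ * Amat n q

/-- The matrix `B(x)` with entries `B(x)_{q',q} = x^* W_{q',q} x`. -/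
def Bmat (n : ℕ) (x : Fin n × Fin n → ℂ) : Matrix (Fin n) (Fin n) ℂ :=
  fun q' q => star x ⬝ᵥ (Wmat n q' q).mulVec x

/-- Euclidean (`ℓ₂`) norm of a finitely supported complex vector. -/
def euclNorm {ι : Type*} [Fintype ι] (x : ι → ℂ) : ℝ :=
  Real.sqrt (∑ i, ‖x i‖ ^ 2)

/-- Frobenius norm of a matrix. -/
def frobNorm {ι κ : Type*} [Fintype ι] [Fintype κ] (A : Matrix ι κ ℂ) : ℝ :=
  Real.sqrt (∑ i, ∑ j, ‖A i j‖ ^ 2)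

/-- Operator (`ℓ₂ → ℓ₂`) norm of a matrix. -/
def opNorm {ι κ : Type*} [Fintype ι] [Fintype κ] (A : Matrix ι κ ℂ) : ℝ :=
  sSup {c : ℝ | ∃ x : κ → ℂ, euclNorm x ≤ 1 ∧ c = euclNorm (A.mulVec x)}

open scoped Classical in
/-- Number of nonzero entries of a vector. -/
def sparsity {ι : Type*} [Fintype ι] (x : ι → ℂ) : ℕ :=
  (Finset.univ.filter fun j => x j ≠ 0).card

/-- `T_s`: unit-norm `s`-sparse vectors in `ℂ^{n²}`. -/
def sparseSphere (n s : ℕ) : Set (Fin n × Fin n → ℂ) :=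
  {x | euclNorm x = 1 ∧ sparsity x ≤ s}

/-- Covering number: minimal cardinality of a subset `S ⊆ T` such that every point of `T`
is within distance `u` (w.r.t. `d`) of a point of `S`. -/
def coveringNumber {α : Type*} (T : Set α) (d : α → α → ℝ) (u : ℝ) : ℝ :=
  sInf {N : ℝ | ∃ S : Finset α, ↑S ⊆ T ∧ (∀ x ∈ T, ∃ y ∈ S, d x y ≤ u) ∧ N = S.card}

/-- Restricted isometry constant of order `s` of the matrix `A`. -/
def ripConst {ι κ : Type*} [Fintype ι] [Fintype κ] (A : Matrix ι κ ℂ) (s : ℕ) : ℝ :=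
  sInf {δ : ℝ | 0 ≤ δ ∧ ∀ x : κ → ℂ, sparsity x ≤ s →
    (1 - δ) * euclNorm x ^ 2 ≤ euclNorm (A.mulVec x) ^ 2 ∧
      euclNorm (A.mulVec x) ^ 2 ≤ (1 + δ) * euclNorm x ^ 2}

/-- Gabor synthesis matrix: the column indexed by `λ` is `π(λ) g`. -/
def gaborMatrix (n : ℕ) (g : Fin n → ℂ) : Matrix (Fin n) (Fin n × Fin n) ℂ :=
  fun r lam => (pimat n lam).mulVec g r

/-- The Rademacher distribution on `ℂ`: values `±1` with probability `1/2` each. -/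
def rademacherMeasure : Measure ℂ :=
  (2 : ENNReal)⁻¹ • (Measure.dirac 1 + Measure.dirac (-1))

/-- The Steinhaus distribution: uniform distribution on the complex unit circle. -/
def steinhausMeasure : Measure ℂ :=
  Measure.map (fun t : ℝ => Complex.exp (2 * Real.pi * t * Complex.I))
    (volume.restrict (Set.Ioc (0 : ℝ) 1))

/-- `ε` is a Rademacher sequence: independent entries, each `±1` with probability 1/2. -/
def IsRademacherVec {Ω : Type*} [MeasurableSpace Ω] (μ : Measure Ω) {n : ℕ}
    (ε : Ω → Fin n → ℂ) : Prop :=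
  iIndepFun (fun q ω => ε ω q) μ ∧
    ∀ q, μ.map (fun ω => ε ω q) = rademacherMeasure

/-- `ε` is a Steinhaus sequence: independent entries, each uniform on the unit circle. -/
def IsSteinhausVec {Ω : Type*} [MeasurableSpace Ω] (μ : Measure Ω) {n : ℕ}
    (ε : Ω → Fin n → ℂ) : Prop :=
  iIndepFun (fun q ω => ε ω q) μ ∧
    ∀ q, μ.map (fun ω => ε ω q) = steinhausMeasure

end

/-!
Write `x* W x - y* W y = (x - y)* W x + y* W (x - y)`. It then suffices to show
`∑_{q',q} |u* A_{q'}* A_q v|² ≤ s n ‖u‖² ‖v‖²` for `s`-sparse `u`. Up to unimodular factors,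
`A_{q'}* w` is `w` shifted by `q'`, so Cauchy–Schwarz on the support of `u` gives
`∑_{q'} |u* A_{q'}* w|² ≤ s ‖u‖² ‖w‖²`; and `A_q` applies the DFT matrix, whose columns are
orthogonal of norm `√n`, to shifted rows of `v`, so `∑_q ‖A_q v‖² = n ‖v‖²`.
-/

open Finset
open Fin.NatCast

lemma euclNorm_sq {ι : Type*} [Fintype ι] (x : ι → ℂ) : euclNorm x ^ 2 = ∑ i, ‖x i‖ ^ 2 :=
  Real.sq_sqrt (sum_nonneg fun _ _ => sq_nonneg _)

lemma frobNorm_sq {ι κ : Type*} [Fintype ι] [Fintype κ] (A : Matrix ι κ ℂ) :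
    frobNorm A ^ 2 = ∑ i, ∑ j, ‖A i j‖ ^ 2 :=
  Real.sq_sqrt (sum_nonneg fun _ _ => sum_nonneg fun _ _ => sq_nonneg _)

lemma star_dotProduct_self {ι : Type*} [Fintype ι] (w : ι → ℂ) :
    star w ⬝ᵥ w = ((∑ i, ‖w i‖ ^ 2 : ℝ) : ℂ) := by
  simp [dotProduct, Complex.conj_mul']

lemma star_dotProduct_mulVec_sub {ι : Type*} [Fintype ι] (M : Matrix ι ι ℂ) (x y : ι → ℂ) :
    star x ⬝ᵥ M *ᵥ x - star y ⬝ᵥ M *ᵥ y = star (x - y) ⬝ᵥ M *ᵥ x + star y ⬝ᵥ M *ᵥ (x - y) := by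
  rw [star_sub, sub_dotProduct, mulVec_sub, dotProduct_sub]
  ring

lemma norm_star_dotProduct_mulVec_comm {m k : Type*} [Fintype m] [Fintype k]
    (M : Matrix m k ℂ) (u : m → ℂ) (v : k → ℂ) :
    ‖star u ⬝ᵥ M *ᵥ v‖ = ‖star v ⬝ᵥ Mᴴ *ᵥ u‖ := by
  rw [star_dotProduct, norm_star, star_mulVec, dotProduct_mulVec]

lemma norm_star_dotProduct_sq_le {ι : Type*} [Fintype ι] (x u : ι → ℂ) {S : Finset ι}
    (hS : ∀ i ∉ S, x i = 0) :
    ‖star x ⬝ᵥ u‖ ^ 2 ≤ (∑ i, ‖x i‖ ^ 2) * ∑ i ∈ S, ‖u i‖ ^ 2 := by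
  have hsupp : star x ⬝ᵥ u = ∑ i ∈ S, star (x i) * u i :=
    (sum_subset (subset_univ S) fun i _ hi => by simp [hS i hi]).symm
  calc ‖star x ⬝ᵥ u‖ ^ 2 ≤ (∑ i ∈ S, ‖x i‖ * ‖u i‖) ^ 2 := by
        rw [hsupp]
        gcongr
        exact (norm_sum_le _ _).trans_eq (by simp only [norm_mul, norm_star])
    _ ≤ (∑ i ∈ S, ‖x i‖ ^ 2) * ∑ i ∈ S, ‖u i‖ ^ 2 := sum_mul_sq_le_sq_mul_sq _ _ _
    _ ≤ (∑ i, ‖x i‖ ^ 2) * ∑ i ∈ S, ‖u i‖ ^ 2 := by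
        gcongr
        exact subset_univ S

lemma sum_norm_sq_mulVec_of_conjTranspose_mul_self {m ι : Type*} [Fintype m] [Fintype ι]
    [DecidableEq ι] {F : Matrix m ι ℂ} {c : ℝ} (hF : Fᴴ * F = (c : ℂ) • 1) (v : ι → ℂ) :
    ∑ r, ‖(F *ᵥ v) r‖ ^ 2 = c * ∑ l, ‖v l‖ ^ 2 := by
  apply Complex.ofReal_injective
  rw [← star_dotProduct_self, Complex.ofReal_mul, ← star_dotProduct_self, star_mulVec,
    ← dotProduct_mulVec, mulVec_mulVec, hF, smul_mulVec, one_mulVec, dotProduct_smul,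
    smul_eq_mul]

lemma geom_sum_eq_ite_of_pow_eq_one {K : Type*} [Field K] [DecidableEq K] {η : K} {n : ℕ}
    (h : η ^ n = 1) :
    ∑ i ∈ range n, η ^ i = if η = 1 then (n : K) else 0 := by
  split_ifs with h1
  · simp [h1]
  · rw [geom_sum_eq h1, h, sub_self, zero_div]

noncomputable def unitRoot (n : ℕ) (r : Fin n) : ℂ :=
  Complex.exp (2 * Real.pi * Complex.I * (r : ℕ) / n)

lemma unitRoot_eq_pow (n : ℕ) (r : Fin n) :
    unitRoot n r = Complex.exp (2 * Real.pi * Complex.I / n) ^ (r : ℕ) := by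
  rw [unitRoot, ← Complex.exp_nat_mul]
  ring_nf

noncomputable def dftMatrix (n : ℕ) : Matrix (Fin n) (Fin n) ℂ :=
  vandermonde (unitRoot n)

lemma dftMatrix_apply (n : ℕ) (r l : Fin n) : dftMatrix n r l = unitRoot n r ^ (l : ℕ) :=
  vandermonde_apply _ _ _

lemma conjTranspose_dftMatrix_mul_self (n : ℕ) [NeZero n] :
    (dftMatrix n)ᴴ * dftMatrix n = (n : ℂ) • 1 := by
  set ζ := Complex.exp (2 * Real.pi * Complex.I / n)
  have hζ : IsPrimitiveRoot ζ n := Complex.isPrimitiveRoot_exp n (NeZero.ne n)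
  have hζ0 : ζ ≠ 0 := hζ.ne_zero (NeZero.ne n)
  have hstar : star ζ = ζ⁻¹ := (Complex.inv_eq_conj (hζ.norm'_eq_one (NeZero.ne n))).symm
  ext a b
  have hterm : ∀ r : Fin n, star (unitRoot n r ^ (a : ℕ)) * unitRoot n r ^ (b : ℕ) =
      ((ζ ^ (a : ℕ))⁻¹ * ζ ^ (b : ℕ)) ^ (r : ℕ) := by
    intro r
    rw [unitRoot_eq_pow, star_pow, star_pow, hstar]
    ring
  have hpow : ((ζ ^ (a : ℕ))⁻¹ * ζ ^ (b : ℕ)) ^ n = 1 := by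
    rw [mul_pow, inv_pow, ← pow_mul, ← pow_mul, pow_mul', pow_mul', hζ.pow_eq_one, one_pow,
      one_pow, inv_one, one_mul]
  have hone : (ζ ^ (a : ℕ))⁻¹ * ζ ^ (b : ℕ) = 1 ↔ a = b := by
    rw [inv_mul_eq_one₀ (pow_ne_zero _ hζ0), ← Fin.val_inj]
    exact ⟨fun h => hζ.pow_inj a.isLt b.isLt h, fun h => h ▸ rfl⟩
  simp only [mul_apply, conjTranspose_apply, dftMatrix_apply, hterm, Matrix.smul_apply,
    one_apply, smul_eq_mul, mul_ite, mul_one, mul_zero]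
  rw [Fin.sum_univ_eq_sum_range (fun i => ((ζ ^ (a : ℕ))⁻¹ * ζ ^ (b : ℕ)) ^ i),
    geom_sum_eq_ite_of_pow_eq_one hpow]
  simp only [hone]

lemma Tmat_apply (n : ℕ) [NeZero n] (q j : Fin n) :
    Tmat n q j = if j = q - 1 then 1 else 0 := by
  have hval : ((q - 1 : Fin n) : ℕ) = ((q : ℕ) + (n - 1)) % n := by
    rw [Fin.val_sub, Fin.val_one', add_comm]
    rcases (Nat.one_le_iff_ne_zero.2 (NeZero.ne n)).eq_or_lt with h | h
    · simp [← h]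
    · rw [Nat.mod_eq_of_lt h]
  simp only [Tmat, ← hval, Fin.val_inj]

lemma Tmat_pow_apply (n : ℕ) [NeZero n] (m : ℕ) (q j : Fin n) :
    (Tmat n ^ m) q j = if j = q - m then 1 else 0 := by
  induction m generalizing j with
  | zero => simp [one_apply, eq_comm]
  | succ m ih =>
    simp only [pow_succ, mul_apply, ih, Tmat_apply, ite_mul, one_mul, zero_mul,
      sum_ite_eq', mem_univ, if_true, Nat.cast_succ, sub_sub]

lemma Amat_apply (n : ℕ) [NeZero n] (q r : Fin n) (p : Fin n × Fin n) :
    Amat n q r p = if p.1 = r - q then unitRoot n r ^ (p.2 : ℕ) else 0 := by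
  simp only [Amat, Mmat, diagonal_pow, diagonal_mul, Tmat_pow_apply, Fin.cast_val_eq_self,
    mul_ite, mul_one, mul_zero, Pi.pow_apply, unitRoot]

lemma Amat_mulVec_apply (n : ℕ) [NeZero n] (q r : Fin n) (v : Fin n × Fin n → ℂ) :
    (Amat n q *ᵥ v) r = (dftMatrix n *ᵥ fun l => v (r - q, l)) r := by
  simp [mulVec, dotProduct, Fintype.sum_prod_type, Amat_apply, ite_mul, dftMatrix_apply]

lemma sum_euclNorm_Amat_mulVec_sq (n : ℕ) [NeZero n] (v : Fin n × Fin n → ℂ) :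
    ∑ q, euclNorm (Amat n q *ᵥ v) ^ 2 = n * euclNorm v ^ 2 := by
  have hdft := sum_norm_sq_mulVec_of_conjTranspose_mul_self (conjTranspose_dftMatrix_mul_self n)
  calc ∑ q, euclNorm (Amat n q *ᵥ v) ^ 2
      = ∑ r, ∑ k, ‖(dftMatrix n *ᵥ fun l => v (k, l)) r‖ ^ 2 := by
        simp only [euclNorm_sq, Amat_mulVec_apply]
        rw [sum_comm]
        exact sum_congr rfl fun r _ => Fintype.sum_equiv (Equiv.subLeft r) _ _ fun _ => rfl
    _ = n * euclNorm v ^ 2 := by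
        rw [sum_comm, euclNorm_sq, Fintype.sum_prod_type, mul_sum]
        simp only [hdft]

lemma norm_conjTranspose_Amat_mulVec_apply (n : ℕ) [NeZero n] (q : Fin n) (w : Fin n → ℂ)
    (p : Fin n × Fin n) : ‖((Amat n q)ᴴ *ᵥ w) p‖ = ‖w (p.1 + q)‖ := by
  have hnorm : ‖unitRoot n (p.1 + q)‖ = 1 := by
    rw [unitRoot_eq_pow, norm_pow,
      (Complex.isPrimitiveRoot_exp n (NeZero.ne n)).norm'_eq_one (NeZero.ne n), one_pow]
  have hsub : ∀ r : Fin n, p.1 = r - q ↔ r = p.1 + q := fun r => by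
    rw [eq_sub_iff_add_eq, eq_comm]
  simp [mulVec, dotProduct, conjTranspose_apply, Amat_apply, hsub, apply_ite (starRingEnd ℂ),
    hnorm]

lemma sum_norm_sq_star_dotProduct_Amat_le (n : ℕ) [NeZero n] (x : Fin n × Fin n → ℂ)
    (w : Fin n → ℂ) :
    ∑ q, ‖star x ⬝ᵥ (Amat n q)ᴴ *ᵥ w‖ ^ 2 ≤ sparsity x * euclNorm x ^ 2 * euclNorm w ^ 2 := by
  classical
  set S := univ.filter fun p => x p ≠ 0
  have hS : ∀ p ∉ S, x p = 0 := fun p hp => by simpa [S] using hp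
  calc ∑ q, ‖star x ⬝ᵥ (Amat n q)ᴴ *ᵥ w‖ ^ 2
      ≤ ∑ q, euclNorm x ^ 2 * ∑ p ∈ S, ‖w (p.1 + q)‖ ^ 2 := by
        gcongr with q
        rw [euclNorm_sq]
        simpa only [norm_conjTranspose_Amat_mulVec_apply] using
          norm_star_dotProduct_sq_le x ((Amat n q)ᴴ *ᵥ w) hS
    _ = euclNorm x ^ 2 * ∑ _p ∈ S, euclNorm w ^ 2 := by
        rw [← mul_sum, sum_comm, euclNorm_sq w]
        exact congrArg _ (sum_congr rfl fun p _ =>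
          Fintype.sum_equiv (Equiv.addLeft p.1) (fun q => ‖w (p.1 + q)‖ ^ 2) _ fun _ => rfl)
    _ = sparsity x * euclNorm x ^ 2 * euclNorm w ^ 2 := by
        rw [sum_const, nsmul_eq_mul]
        simp only [sparsity, S]
        ring

lemma sum_norm_sq_star_dotProduct_gram_le (n : ℕ) [NeZero n] (u v : Fin n × Fin n → ℂ) :
    ∑ q', ∑ q, ‖star u ⬝ᵥ ((Amat n q')ᴴ * Amat n q) *ᵥ v‖ ^ 2 ≤
      sparsity u * n * euclNorm u ^ 2 * euclNorm v ^ 2 := by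
  calc ∑ q', ∑ q, ‖star u ⬝ᵥ ((Amat n q')ᴴ * Amat n q) *ᵥ v‖ ^ 2
      = ∑ q, ∑ q', ‖star u ⬝ᵥ (Amat n q')ᴴ *ᵥ (Amat n q *ᵥ v)‖ ^ 2 := by
        simp only [mulVec_mulVec]
        exact sum_comm
    _ ≤ ∑ q, sparsity u * euclNorm u ^ 2 * euclNorm (Amat n q *ᵥ v) ^ 2 :=
        sum_le_sum fun q _ => sum_norm_sq_star_dotProduct_Amat_le n u _
    _ = sparsity u * n * euclNorm u ^ 2 * euclNorm v ^ 2 := by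
        rw [← mul_sum, sum_euclNorm_Amat_mulVec_sq]
        ring

lemma Bmat_sub_apply (n : ℕ) (x y : Fin n × Fin n → ℂ) (q' q : Fin n) :
    (Bmat n x - Bmat n y) q' q = if q' = q then 0 else
      star x ⬝ᵥ ((Amat n q')ᴴ * Amat n q) *ᵥ x - star y ⬝ᵥ ((Amat n q')ᴴ * Amat n q) *ᵥ y := by
  by_cases h : q' = q <;> simp [Bmat, Wmat, h]

lemma frobNorm_Bmat_sub_sq_le (n : ℕ) [NeZero n] (x y : Fin n × Fin n → ℂ) :
    frobNorm (Bmat n x - Bmat n y) ^ 2 ≤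
      2 * n * (sparsity x * euclNorm x ^ 2 + sparsity y * euclNorm y ^ 2) *
        euclNorm (x - y) ^ 2 := by
  set G := fun q' q => (Amat n q')ᴴ * Amat n q
  have hentry : ∀ q' q, ‖(Bmat n x - Bmat n y) q' q‖ ^ 2 ≤
      2 * ‖star x ⬝ᵥ G q q' *ᵥ (x - y)‖ ^ 2 + 2 * ‖star y ⬝ᵥ G q' q *ᵥ (x - y)‖ ^ 2 := by
    intro q' q
    rw [Bmat_sub_apply]
    split_ifs
    · rw [norm_zero, zero_pow two_ne_zero]
      positivity
    · have hG : (G q' q)ᴴ = G q q' := by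
        simp only [G, conjTranspose_mul, conjTranspose_conjTranspose]
      rw [star_dotProduct_mulVec_sub, ← mul_add, ← hG, ← norm_star_dotProduct_mulVec_comm]
      exact (pow_le_pow_left₀ (norm_nonneg _) (norm_add_le _ _) 2).trans add_sq_le
  rw [frobNorm_sq]
  calc ∑ q', ∑ q, ‖(Bmat n x - Bmat n y) q' q‖ ^ 2
      ≤ ∑ q', ∑ q, (2 * ‖star x ⬝ᵥ G q q' *ᵥ (x - y)‖ ^ 2 +
          2 * ‖star y ⬝ᵥ G q' q *ᵥ (x - y)‖ ^ 2) := by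
        gcongr with q' _ q _
        exact hentry q' q
    _ = 2 * ∑ q, ∑ q', ‖star x ⬝ᵥ G q q' *ᵥ (x - y)‖ ^ 2 +
          2 * ∑ q', ∑ q, ‖star y ⬝ᵥ G q' q *ᵥ (x - y)‖ ^ 2 := by
        simp only [sum_add_distrib, ← mul_sum]
        rw [sum_comm]
    _ ≤ 2 * (sparsity x * n * euclNorm x ^ 2 * euclNorm (x - y) ^ 2) +
          2 * (sparsity y * n * euclNorm y ^ 2 * euclNorm (x - y) ^ 2) := by
        gcongr
        · exact sum_norm_sq_star_dotProduct_gram_le n x (x - y)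
        · exact sum_norm_sq_star_dotProduct_gram_le n y (x - y)
    _ = _ := by ring

theorem d2_lipschitz_general (n s : ℕ) (x y : Fin n × Fin n → ℂ)
    (hx : x ∈ sparseSphere n s) (hy : y ∈ sparseSphere n s) :
    frobNorm (Bmat n x - Bmat n y) =
      Real.sqrt (∑ q' : Fin n, ∑ q : Fin n, if q' = q then 0 else
        ‖star x ⬝ᵥ ((Amat n q')ᴴ * Amat n q).mulVec x -
          star y ⬝ᵥ ((Amat n q')ᴴ * Amat n q).mulVec y‖ ^ 2) ∧
    frobNorm (Bmat n x - Bmat n y) ≤ 2 * Real.sqrt ((s : ℝ) * n) * euclNorm (x - y) := by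
  obtain ⟨hx1, hxs⟩ := hx
  obtain ⟨hy1, hys⟩ := hy
  refine ⟨?_, ?_⟩
  · simp only [frobNorm, Bmat_sub_apply, apply_ite (‖·‖ ^ 2), norm_zero, zero_pow two_ne_zero]
  have : NeZero n := ⟨by rintro rfl; simp [euclNorm] at hx1⟩
  refine (pow_le_pow_iff_left₀ (by unfold frobNorm; positivity) (by unfold euclNorm; positivity)
    two_ne_zero).1 ?_
  calc frobNorm (Bmat n x - Bmat n y) ^ 2
      ≤ 2 * n * (sparsity x * euclNorm x ^ 2 + sparsity y * euclNorm y ^ 2) *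
          euclNorm (x - y) ^ 2 := frobNorm_Bmat_sub_sq_le n x y
    _ ≤ 2 * n * (s + s) * euclNorm (x - y) ^ 2 := by
        rw [hx1, hy1, one_pow, mul_one, mul_one]
        gcongr
    _ = (2 * Real.sqrt ((s : ℝ) * n) * euclNorm (x - y)) ^ 2 := by
        rw [mul_pow, mul_pow, Real.sq_sqrt (by positivity)]
        ring

/-- `d₂(x,y) ≤ 2 √(sn) ‖x-y‖₂` on `T_s`. -/
theorem d2_lipschitz (n s : ℕ) (hs : 1 ≤ s) (hsn : s ≤ n) (x y : Fin n × Fin n → ℂ)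
    (hx : x ∈ sparseSphere n s) (hy : y ∈ sparseSphere n s) :
    frobNorm (Bmat n x - Bmat n y) =
      Real.sqrt (∑ q' : Fin n, ∑ q : Fin n, if q' = q then 0 else
        ‖star x ⬝ᵥ ((Amat n q')ᴴ * Amat n q).mulVec x -
          star y ⬝ᵥ ((Amat n q')ᴴ * Amat n q).mulVec y‖ ^ 2) ∧
    frobNorm (Bmat n x - Bmat n y) ≤ 2 * Real.sqrt ((s : ℝ) * n) * euclNorm (x - y) :=
  d2_lipschitz_general n s x y hx hy
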